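/- For integers m > 1 and 0 ≤ l < m, the sum over j from 1 to m-1 of ζ^{jl}/(1 - ζ^{-j}), where ζ = e^{2πi/m} is a primitive m-th root of unity, equals (m-1)/2 - l. -/

import Mathlib

/-!
Write `S l` for the sum. Since `ζ ^ (j * (l + 1)) - ζ ^ (j * l) = ζ ^ (j * l) (ζ ^ j - 1)` and
`(w - 1) / (1 - w⁻¹) = w`, consecutive sums differ by the geometric sum `∑ (ζ ^ (l + 1)) ^ j = -1`,
so `S l = S 0 - l`. For `S 0`, the identity `(1 - w⁻¹)⁻¹ + (1 - w)⁻¹ = 1` together with the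
reflection `j ↦ m - j`, which exchanges `ζ ^ j` and `ζ ^ (-j)`, gives `2 S 0 = m - 1`.
-/

open Finset

theorem inv_one_sub_inv_add_inv_one_sub {K : Type*} [Field K] {w : K} (h0 : w ≠ 0) (h1 : w ≠ 1) :
    (1 - w⁻¹)⁻¹ + (1 - w)⁻¹ = 1 := by
  have : 1 - w ≠ 0 := sub_ne_zero.mpr h1.symm
  have : w - 1 ≠ 0 := sub_ne_zero.mpr h1
  field_simp
  ring

theorem sub_one_div_one_sub_inv {K : Type*} [Field K] {w : K} (h0 : w ≠ 0) (h1 : w ≠ 1) :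
    (w - 1) / (1 - w⁻¹) = w := by
  have : w - 1 ≠ 0 := sub_ne_zero.mpr h1
  field_simp

theorem sum_Icc_pow_eq_neg_one {K : Type*} [Field K] {η : K} {m : ℕ} (hm : 0 < m)
    (hη : η ^ m = 1) (h1 : η ≠ 1) : ∑ j ∈ Icc 1 (m - 1), η ^ j = -1 := by
  have hgeom : ∑ j ∈ range m, η ^ j = 0 := by
    rw [geom_sum_eq h1, hη, sub_self, zero_div]
  rw [Nat.range_eq_Icc_zero_sub_one m hm.ne', Icc_eq_cons_Ioc (Nat.zero_le _), sum_cons, pow_zero,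
    ← Icc_add_one_left_eq_Ioc, zero_add] at hgeom
  linear_combination hgeom

theorem sum_Icc_inv_pow_eq_sum_pow {G M : Type*} [DivisionMonoid G] [AddCommMonoid M] {ζ : G}
    {m : ℕ} (hζ : ζ ^ m = 1) (g : G → M) :
    ∑ j ∈ Icc 1 (m - 1), g (ζ ^ j)⁻¹ = ∑ j ∈ Icc 1 (m - 1), g (ζ ^ j) := by
  refine sum_nbij' (m - ·) (m - ·) ?_ ?_ ?_ ?_ ?_ <;> intro j hj <;> simp only [mem_Icc] at hj ⊢
    <;> try omega
  have hinv : (ζ ^ j)⁻¹ = ζ ^ (m - j) :=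
    inv_eq_of_mul_eq_one_right (by rw [← pow_add, Nat.add_sub_cancel' (by omega), hζ])
  rw [hinv]

def rootFractionSum {K : Type*} [Field K] (ζ : K) (m l : ℕ) : K :=
  ∑ j ∈ Icc 1 (m - 1), ζ ^ (j * l) / (1 - ζ ^ (-(j : ℤ)))

namespace IsPrimitiveRoot

variable {K : Type*} [Field K] {ζ : K} {m : ℕ}

theorem pow_ne_one_of_mem_Icc (hζ : IsPrimitiveRoot ζ m) {j : ℕ} (hj : j ∈ Icc 1 (m - 1)) :
    ζ ^ j ≠ 1 := by
  rw [mem_Icc] at hj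
  exact hζ.pow_ne_one_of_pos_of_lt (by omega) (by omega)

theorem two_mul_rootFractionSum_zero (hζ : IsPrimitiveRoot ζ m) (hm : 0 < m) :
    2 * rootFractionSum ζ m 0 = m - 1 := by
  have hS : rootFractionSum ζ m 0 = ∑ j ∈ Icc 1 (m - 1), (1 - (ζ ^ j)⁻¹)⁻¹ := by
    simp only [rootFractionSum, mul_zero, pow_zero, one_div, zpow_neg, zpow_natCast]
  have hpair : ∑ j ∈ Icc 1 (m - 1), ((1 - (ζ ^ j)⁻¹)⁻¹ + (1 - ζ ^ j)⁻¹) = m - 1 := by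
    rw [sum_congr rfl fun j hj => inv_one_sub_inv_add_inv_one_sub
      (pow_ne_zero j (hζ.ne_zero (by rw [mem_Icc] at hj; omega))) (hζ.pow_ne_one_of_mem_Icc hj)]
    simp [Nat.cast_sub hm]
  have hreflect := sum_Icc_inv_pow_eq_sum_pow hζ.pow_eq_one fun w : K => (1 - w⁻¹)⁻¹
  simp only [inv_inv] at hreflect
  rw [sum_add_distrib, hreflect, ← hS] at hpair
  linear_combination hpair

theorem rootFractionSum_succ (hζ : IsPrimitiveRoot ζ m) {l : ℕ} (hl : l + 1 < m) :
    rootFractionSum ζ m (l + 1) = rootFractionSum ζ m l - 1 := by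
  have hdiff : ∀ j ∈ Icc 1 (m - 1), ζ ^ (j * (l + 1)) / (1 - ζ ^ (-(j : ℤ))) -
      ζ ^ (j * l) / (1 - ζ ^ (-(j : ℤ))) = (ζ ^ (l + 1)) ^ j := by
    intro j hj
    have hζj : ζ ^ j ≠ 0 := pow_ne_zero j (hζ.ne_zero (by rw [mem_Icc] at hj; omega))
    calc ζ ^ (j * (l + 1)) / (1 - ζ ^ (-(j : ℤ))) - ζ ^ (j * l) / (1 - ζ ^ (-(j : ℤ)))
        = ζ ^ (j * l) * ((ζ ^ j - 1) / (1 - (ζ ^ j)⁻¹)) := by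
          rw [zpow_neg, zpow_natCast, mul_add_one, pow_add]
          ring
      _ = (ζ ^ (l + 1)) ^ j := by
          rw [sub_one_div_one_sub_inv hζj (hζ.pow_ne_one_of_mem_Icc hj), ← pow_mul, ← pow_add]
          ring_nf
  have hgeom : ∑ j ∈ Icc 1 (m - 1), (ζ ^ (l + 1)) ^ j = -1 :=
    sum_Icc_pow_eq_neg_one (by omega) (by rw [← pow_mul, mul_comm, pow_mul, hζ.pow_eq_one,
      one_pow]) (hζ.pow_ne_one_of_pos_of_lt l.succ_ne_zero hl)
  rw [← sum_congr rfl hdiff, sum_sub_distrib] at hgeom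
  unfold rootFractionSum
  linear_combination hgeom

theorem two_mul_rootFractionSum (hζ : IsPrimitiveRoot ζ m) {l : ℕ} (hl : l < m) :
    2 * rootFractionSum ζ m l = m - 1 - 2 * l := by
  induction l with
  | zero => simpa using hζ.two_mul_rootFractionSum_zero hl
  | succ l ih =>
    rw [hζ.rootFractionSum_succ hl, mul_sub, ih (by omega)]
    push_cast
    ring

end IsPrimitiveRoot

theorem sum_primitive_root_fraction_general (m l : ℕ) (hl : l < m)
    (ζ : ℂ) (hζ : ζ = Complex.exp (2 * Real.pi * Complex.I / m)) :
    ∑ j ∈ Finset.Icc 1 (m - 1), ζ ^ (j * l) / (1 - ζ ^ (-(j : ℤ))) =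
      ((m : ℂ) - 1) / 2 - l := by
  have hprim : IsPrimitiveRoot ζ m := hζ ▸ Complex.isPrimitiveRoot_exp m (by omega)
  have h := hprim.two_mul_rootFractionSum hl
  unfold rootFractionSum at h
  linear_combination h / 2

/-- For integers `m > 1` and `0 ≤ l < m`, with `ζ = exp(2πi/m)`,
`∑_{j=1}^{m-1} ζ^{jl} / (1 - ζ^{-j}) = (m-1)/2 - l`. -/
theorem sum_primitive_root_fraction (m l : ℕ) (hm : 1 < m) (hl : l < m)
    (ζ : ℂ) (hζ : ζ = Complex.exp (2 * Real.pi * Complex.I / m)) :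
    ∑ j ∈ Finset.Icc 1 (m - 1), ζ ^ (j * l) / (1 - ζ ^ (-(j : ℤ))) =
      ((m : ℂ) - 1) / 2 - l :=
  sum_primitive_root_fraction_general m l hl ζ hζ
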